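/- Let G be a finite group with generating set S containing an element s of order 2. Then Player 1 has a winning strategy for RAV(G,S), namely to always play the generator s. -/

import Mathlib

namespace RelatorGames

variable {G : Type*} [Group G]

/-- The letters available in the relator games: elements of `S` and their inverses. -/
def letters (S : Set G) : Set G := S ∪ (fun g => g⁻¹) '' S

/-- Evaluate a history of moves (most recent letter first) to a group element:
the group element represented by the word built so far. -/
def eval (h : List G) : G := h.reverse.prod

/-- A move `m` is legal after history `h`: it is a letter of `S ∪ S⁻¹` and it is not
the inverse of the immediately preceding letter (no backtracking). -/
def LegalMove (S : Set G) (h : List G) (m : G) : Prop :=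
  m ∈ letters S ∧ ∀ p ∈ h.head?, m ≠ p⁻¹

/-- Appending `m` to the history `h` produces a word equal in `G` to some earlier
prefix of the word (equivalently, the walk in the Cayley graph revisits a vertex). -/
def ClosesCycle (h : List G) (m : G) : Prop :=
  ∃ t, t <:+ h ∧ eval t = eval (m :: h)

/-- A strategy: a choice of next letter given the history (most recent letter first). -/
abbrev Strategy (G : Type*) := List G → G

/-- The sequence of histories arising when the first player (moving at even steps)
uses `σ` and the second player (moving at odd steps) uses `τ`. -/
def hist (σ τ : Strategy G) : ℕ → List G
  | 0 => []
  | k + 1 =>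
      (if k % 2 = 0 then σ (hist σ τ k) else τ (hist σ τ k)) :: hist σ τ k

/-- The move made at step `k` in the play of `σ` against `τ`. -/
def moveAt (σ τ : Strategy G) (k : ℕ) : G :=
  if k % 2 = 0 then σ (hist σ τ k) else τ (hist σ τ k)

/-- Step `j` is uneventful: the move made is legal and does not close a cycle. -/
def Ok (S : Set G) (σ τ : Strategy G) (j : ℕ) : Prop :=
  LegalMove S (hist σ τ j) (moveAt σ τ j) ∧ ¬ ClosesCycle (hist σ τ j) (moveAt σ τ j)

/-- In the play of `σ` against `τ`, the player moving at steps congruent to `p` mod 2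
wins the relator achievement game `REL(G,S)`: at the first eventful step, either it is
that player's turn and they legally close a cycle, or it is the opponent's turn and the
opponent has made an illegal move (in particular, has no legal move). -/
def RelWins (S : Set G) (p : ℕ) (σ τ : Strategy G) : Prop :=
  ∃ k : ℕ, (∀ j < k, Ok S σ τ j) ∧
    ((k % 2 = p ∧ LegalMove S (hist σ τ k) (moveAt σ τ k) ∧
        ClosesCycle (hist σ τ k) (moveAt σ τ k)) ∨
      (k % 2 ≠ p ∧ ¬ LegalMove S (hist σ τ k) (moveAt σ τ k)))

/-- In the play of `σ` against `τ`, the player moving at steps congruent to `p` mod 2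
wins the relator avoidance game `RAV(G,S)`: at the first eventful step it is the
opponent's turn, and the opponent either makes an illegal move (in particular, has no
legal move) or closes a cycle. -/
def RavWins (S : Set G) (p : ℕ) (σ τ : Strategy G) : Prop :=
  ∃ k : ℕ, (∀ j < k, Ok S σ τ j) ∧ k % 2 ≠ p ∧
    (¬ LegalMove S (hist σ τ k) (moveAt σ τ k) ∨ ClosesCycle (hist σ τ k) (moveAt σ τ k))

/-- Player 1 has a winning strategy for `REL(G,S)`. -/
def FirstWinsREL (S : Set G) : Prop :=
  ∃ σ : Strategy G, ∀ τ : Strategy G, RelWins S 0 σ τ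

/-- Player 2 has a winning strategy for `REL(G,S)`. -/
def SecondWinsREL (S : Set G) : Prop :=
  ∃ τ : Strategy G, ∀ σ : Strategy G, RelWins S 1 σ τ

/-- Player 1 has a winning strategy for `RAV(G,S)`. -/
def FirstWinsRAV (S : Set G) : Prop :=
  ∃ σ : Strategy G, ∀ τ : Strategy G, RavWins S 0 σ τ

/-- Player 2 has a winning strategy for `RAV(G,S)`. -/
def SecondWinsRAV (S : Set G) : Prop :=
  ∃ τ : Strategy G, ∀ σ : Strategy G, RavWins S 1 σ τ

end RelatorGames

/-!
While no cycle has been closed, the walk in the Cayley graph visits a new vertex at every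
step, so in a finite group some step of every play is eventful; it suffices that Player 1's
move `s` never is. It is legal because Player 2 cannot have just played `s⁻¹`, which would undo
Player 1's previous move. It closes no cycle because the vertices of the walk come in
pairs `{v₂ᵢ, v₂ᵢ₊₁ = v₂ᵢ s}` and `s² = 1`: if the new vertex `v s` (with `v` the current, even
vertex) equalled an earlier vertex `u`, then the partner of `u`, which is `u s = v`, would be an
earlier visit of `v`; `s ≠ 1` rules out `u = v`.
-/

namespace RelatorGames

variable {G : Type*} {S : Set G} {σ τ : Strategy G}

lemma hist_succ (k : ℕ) : hist σ τ (k + 1) = moveAt σ τ k :: hist σ τ k := rfl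

lemma hist_suffix_hist {i j : ℕ} (hij : i ≤ j) : hist σ τ i <:+ hist σ τ j := by
  induction j, hij using Nat.le_induction with
  | base => exact List.suffix_refl _
  | succ j _ ih => exact ih.trans (List.suffix_cons _ _)

lemma exists_eq_hist_of_suffix {k : ℕ} {t : List G} (ht : t <:+ hist σ τ k) :
    ∃ i ≤ k, t = hist σ τ i := by
  induction k with
  | zero => exact ⟨0, le_rfl, List.suffix_nil.mp ht⟩
  | succ k ih =>
    rcases List.suffix_cons_iff.mp ht with rfl | h
    · exact ⟨k + 1, le_rfl, rfl⟩
    · obtain ⟨i, hi, rfl⟩ := ih h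
      exact ⟨i, hi.trans k.le_succ, rfl⟩

lemma moveAt_const_of_even {s : G} {k : ℕ} (hk : k % 2 = 0) : moveAt (fun _ => s) τ k = s := by
  simp [moveAt, hk]

variable [Group G]

lemma eval_cons (m : G) (h : List G) : eval (m :: h) = eval h * m := by
  simp [eval]

variable (σ τ) in
def vertex (k : ℕ) : G := eval (hist σ τ k)

lemma vertex_succ (k : ℕ) : vertex σ τ (k + 1) = vertex σ τ k * moveAt σ τ k := by
  rw [vertex, hist_succ, eval_cons, vertex]

lemma vertex_ne_of_forall_ok {K i j : ℕ} (hok : ∀ j < K, Ok S σ τ j) (hij : i < j)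
    (hjK : j ≤ K) : vertex σ τ i ≠ vertex σ τ j := by
  obtain ⟨j, rfl⟩ : ∃ j', j = j' + 1 := ⟨j - 1, by omega⟩
  exact fun heq => (hok j (by omega)).2 ⟨hist σ τ i, hist_suffix_hist (by omega), heq⟩

lemma exists_not_ok [Finite G] : ∃ k, ¬ Ok S σ τ k := by
  by_contra! hok
  refine not_injective_infinite_finite (vertex σ τ) fun a b hab => ?_
  by_contra hne
  rcases Nat.lt_or_gt_of_ne hne with h | h
  · exact vertex_ne_of_forall_ok (fun j _ => hok j) h le_rfl hab
  · exact vertex_ne_of_forall_ok (fun j _ => hok j) h le_rfl hab.symm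

theorem ravWins_of_ok_on_turn [Finite G] {p : ℕ}
    (hturn : ∀ k, k % 2 = p → (∀ j < k, Ok S σ τ j) → Ok S σ τ k) : RavWins S p σ τ := by
  classical
  have hex : ∃ k, ¬ Ok S σ τ k := exists_not_ok
  have hfirst : ∀ j < Nat.find hex, Ok S σ τ j := fun j hj => not_not.mp (Nat.find_min hex hj)
  have hbad : ¬ Ok S σ τ (Nat.find hex) := Nat.find_spec hex
  refine ⟨Nat.find hex, hfirst, fun hp => hbad (hturn _ hp hfirst), ?_⟩
  rw [Ok, not_and_or, not_not] at hbad
  exact hbad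

section Involution

variable {s : G}

lemma vertex_const_succ_of_even {k : ℕ} (hk : k % 2 = 0) :
    vertex (fun _ => s) τ (k + 1) = vertex (fun _ => s) τ k * s := by
  rw [vertex_succ, moveAt_const_of_even hk]

lemma legalMove_const_of_even (hs : s ∈ S) {k : ℕ} (hk : k % 2 = 0)
    (hok : ∀ j < k, Ok S (fun _ => s) τ j) : LegalMove S (hist (fun _ => s) τ k) s := by
  refine ⟨Or.inl hs, fun p hp => ?_⟩
  obtain ⟨i, rfl⟩ : ∃ i, k = i + 2 := by
    rcases k with _ | _ | i
    · simp [hist] at hp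
    · omega
    · exact ⟨i, rfl⟩
  obtain rfl : p = moveAt (fun _ => s) τ (i + 1) := by simpa [hist_succ] using hp.symm
  have hprev : (hist (fun _ => s) τ (i + 1)).head? = some s := by
    rw [hist_succ, moveAt_const_of_even (by omega)]
    rfl
  have hlegal := (hok (i + 1) (by omega)).1.2 s hprev
  exact fun h => hlegal (inv_eq_iff_eq_inv.mp h.symm)

lemma not_closesCycle_const_of_even (hss : s * s = 1) (hs1 : s ≠ 1) {k : ℕ} (hk : k % 2 = 0)
    (hok : ∀ j < k, Ok S (fun _ => s) τ j) : ¬ ClosesCycle (hist (fun _ => s) τ k) s := by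
  rintro ⟨t, hts, hclose⟩
  obtain ⟨i, hik, rfl⟩ := exists_eq_hist_of_suffix hts
  have hvi : vertex (fun _ => s) τ i = vertex (fun _ => s) τ k * s := by
    rw [vertex, hclose, eval_cons, vertex]
  suffices ∃ a < k, vertex (fun _ => s) τ a = vertex (fun _ => s) τ k * s * s by
    obtain ⟨a, hak, ha⟩ := this
    exact vertex_ne_of_forall_ok hok hak le_rfl (by rwa [mul_assoc, hss, mul_one] at ha)
  rcases Nat.even_or_odd' i with ⟨m, rfl | rfl⟩
  · have hne : 2 * m ≠ k := by
      rintro rfl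
      exact hs1 (mul_eq_left.mp hvi.symm)
    refine ⟨2 * m + 1, by omega, ?_⟩
    rw [vertex_const_succ_of_even (by omega), hvi]
  · refine ⟨2 * m, by omega, ?_⟩
    rw [← hvi, vertex_const_succ_of_even (by omega), mul_assoc, hss, mul_one]

end Involution

end RelatorGames

open RelatorGames in
theorem rav_order_two_generator_first_wins_general {G : Type*} [Group G] [Finite G]
    (S : Set G)
    (s : G) (hs : s ∈ S) (hord : orderOf s = 2) :
    ∀ τ : Strategy G, RavWins S 0 (fun _ => s) τ := by
  intro τ
  have hss : s * s = 1 := by rw [← pow_two, ← hord, pow_orderOf_eq_one]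
  have hs1 : s ≠ 1 := by rintro rfl; simp at hord
  refine ravWins_of_ok_on_turn fun k hk hok => ?_
  rw [Ok, moveAt_const_of_even hk]
  exact ⟨legalMove_const_of_even hs hk hok, not_closesCycle_const_of_even hss hs1 hk hok⟩

open RelatorGames in
/-- If a generating set `S` of a finite group `G` contains an element
`s` of order 2, then Player 1 wins `RAV(G,S)` by always playing `s`. -/
theorem rav_order_two_generator_first_wins {G : Type*} [Group G] [Finite G]
    (S : Set G) (hgen : Subgroup.closure S = ⊤)
    (s : G) (hs : s ∈ S) (hord : orderOf s = 2) :
    ∀ τ : Strategy G, RavWins S 0 (fun _ => s) τ :=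
  rav_order_two_generator_first_wins_general S s hs hord
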